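/- arXiv:1711.00790 — 4 statements merged into one kernel-verified Lean document; each statement's English description precedes it below -/
import Mathlib

section
/- If f : ℤ³≤0 → ℝ>0 satisfies the cube recurrence, then the conductance function C^f is Y−Δ consistent; that is, for all (i,j,k) ∈ ℤ³≤0, C^f_a(i,j,k)·c^f_a(i−1,j,k) = C^f_b(i,j,k)·c^f_b(i,j−1,k) = C^f_c(i,j,k)·c^f_c(i,j,k−1) = C^f_a(i,j,k)C^f_b(i,j,k) + C^f_a(i,j,k)C^f_c(i,j,k) + C^f_b(i,j,k)C^f_c(i,j,k). -/
open scoped BigOperators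
open scoped Classical

noncomputable section

/-- Points of `ℤ³`. -/
abbrev Z3 : Type := ℤ × ℤ × ℤ

/-- The nonpositive octant `ℤ³_{≤ 0}`. -/
def oct (p : Z3) : Prop := p.1 ≤ 0 ∧ p.2.1 ≤ 0 ∧ p.2.2 ≤ 0

/-- The coordinate sum `i + j + k`. -/
def sum3 (p : Z3) : ℤ := p.1 + p.2.1 + p.2.2

/-- A conductance function: the conductances `C_a, C_b, C_c` of the long diagonals.
The short diagonal conductances are their inverses, `c_q = 1/C_q`. -/
structure Conduct where
  Ca : Z3 → ℝ
  Cb : Z3 → ℝ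
  Cc : Z3 → ℝ

namespace Conduct

/-- Positivity of a conductance function on the nonpositive octant. -/
def Pos (C : Conduct) : Prop :=
  ∀ p : Z3, oct p → 0 < C.Ca p ∧ 0 < C.Cb p ∧ 0 < C.Cc p

/-- `S(i,j,k) = C_a C_b + C_a C_c + C_b C_c` at `(i,j,k)`. -/
def S (C : Conduct) (p : Z3) : ℝ :=
  C.Ca p * C.Cb p + C.Ca p * C.Cc p + C.Cb p * C.Cc p

/-- `Y-Δ` consistency: `C_a(i,j,k) c_a(i-1,j,k) = C_b(i,j,k) c_b(i,j-1,k)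
  = C_c(i,j,k) c_c(i,j,k-1) = S(i,j,k)`, where `c_q = 1/C_q`. -/
def YD (C : Conduct) : Prop :=
  ∀ p : Z3, oct p →
    C.Ca p * (C.Ca (p + (-1, 0, 0)))⁻¹ = C.S p ∧
    C.Cb p * (C.Cb (p + (0, -1, 0)))⁻¹ = C.S p ∧
    C.Cc p * (C.Cc (p + (0, 0, -1)))⁻¹ = C.S p

/-- `Δ(i,j,k) = C_b(i,j-1,k)C_c(i,j,k-1) + C_a(i-1,j,k)C_c(i,j,k-1) + C_a(i-1,j,k)C_b(i,j-1,k)`. -/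
def Δ (C : Conduct) (p : Z3) : ℝ :=
  C.Cb (p + (0, -1, 0)) * C.Cc (p + (0, 0, -1)) +
    C.Ca (p + (-1, 0, 0)) * C.Cc (p + (0, 0, -1)) +
    C.Ca (p + (-1, 0, 0)) * C.Cb (p + (0, -1, 0))

/-- `U(i,j,k) = C_b(i,j-1,k)C_c(i,j,k-1)/Δ(i,j,k)`. -/
def U (C : Conduct) (p : Z3) : ℝ :=
  C.Cb (p + (0, -1, 0)) * C.Cc (p + (0, 0, -1)) / C.Δ p

/-- `V(i,j,k) = C_a(i-1,j,k)C_c(i,j,k-1)/Δ(i,j,k)`. -/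
def V (C : Conduct) (p : Z3) : ℝ :=
  C.Ca (p + (-1, 0, 0)) * C.Cc (p + (0, 0, -1)) / C.Δ p

/-- `W(i,j,k) = C_a(i-1,j,k)C_b(i,j-1,k)/Δ(i,j,k)`. -/
def W (C : Conduct) (p : Z3) : ℝ :=
  C.Ca (p + (-1, 0, 0)) * C.Cb (p + (0, -1, 0)) / C.Δ p

/-- The translated conductance function `C^μ`, `C^μ_q(p) = C_q(p + μ)`. -/
def tr (C : Conduct) (μ : Z3) : Conduct :=
  ⟨fun p => C.Ca (p + μ), fun p => C.Cb (p + μ), fun p => C.Cc (p + μ)⟩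

end Conduct

/-- `f : ℤ³_{≤0} → ℝ` satisfies the cube recurrence. -/
def CubeRec (f : Z3 → ℝ) : Prop :=
  ∀ p : Z3, oct p →
    f p * f (p + (-1, -1, -1)) =
      f (p + (-1, 0, 0)) * f (p + (0, -1, -1)) +
        f (p + (0, -1, 0)) * f (p + (-1, 0, -1)) +
        f (p + (0, 0, -1)) * f (p + (-1, -1, 0))

/-- Positivity on the nonpositive octant. -/
def PosOn (f : Z3 → ℝ) : Prop := ∀ p : Z3, oct p → 0 < f p

/-- The conductance function `C^f` associated to a solution `f` of the cube recurrence. -/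
def Cf (f : Z3 → ℝ) : Conduct where
  Ca p := f (p + (0, -1, 0)) * f (p + (0, 0, -1)) / (f p * f (p + (0, -1, -1)))
  Cb p := f (p + (-1, 0, 0)) * f (p + (0, 0, -1)) / (f p * f (p + (-1, 0, -1)))
  Cc p := f (p + (-1, 0, 0)) * f (p + (0, -1, 0)) / (f p * f (p + (-1, -1, 0)))

/-! ### Rhombi and their diagonals -/

/-- Long diagonal `E_a(i,j,k) = {(i,j-1,k),(i,j,k-1)}`. -/
def Ea (p : Z3) : Sym2 Z3 := s(p + (0, -1, 0), p + (0, 0, -1))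
/-- Long diagonal `E_b(i,j,k) = {(i-1,j,k),(i,j,k-1)}`. -/
def Eb (p : Z3) : Sym2 Z3 := s(p + (-1, 0, 0), p + (0, 0, -1))
/-- Long diagonal `E_c(i,j,k) = {(i-1,j,k),(i,j-1,k)}`. -/
def Ec (p : Z3) : Sym2 Z3 := s(p + (-1, 0, 0), p + (0, -1, 0))
/-- Short diagonal `e_a(i,j,k) = {(i,j,k),(i,j-1,k-1)}`. -/
def ea (p : Z3) : Sym2 Z3 := s(p, p + (0, -1, -1))
/-- Short diagonal `e_b(i,j,k) = {(i,j,k),(i-1,j,k-1)}`. -/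
def eb (p : Z3) : Sym2 Z3 := s(p, p + (-1, 0, -1))
/-- Short diagonal `e_c(i,j,k) = {(i,j,k),(i-1,j-1,k)}`. -/
def ec (p : Z3) : Sym2 Z3 := s(p, p + (-1, -1, 0))

/-- The rhombus `r_a(i,j,k)`. -/
def rhA (p : Z3) : Set Z3 := {p, p + (0, -1, 0), p + (0, 0, -1), p + (0, -1, -1)}
/-- The rhombus `r_b(i,j,k)`. -/
def rhB (p : Z3) : Set Z3 := {p, p + (-1, 0, 0), p + (0, 0, -1), p + (-1, 0, -1)}
/-- The rhombus `r_c(i,j,k)`. -/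
def rhC (p : Z3) : Set Z3 := {p, p + (-1, 0, 0), p + (0, -1, 0), p + (-1, -1, 0)}

/-! ### Initial conditions -/

/-- The data of a downward closed subset `ℒ ⊆ ℤ³_{≤0}` with finite complement.  It
determines the set of initial conditions `ℐ` and the complement `𝒰`. -/
structure LowerData where
  L : Set Z3
  sub : ∀ p ∈ L, oct p
  dc : ∀ p ∈ L, ∀ q : Z3, q ≤ p → q ∈ L
  cofin : {p : Z3 | oct p ∧ p ∉ L}.Finite

/-- The set of initial conditions `ℐ = {p ∈ ℒ : p + (1,1,1) ∉ ℒ}`. -/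
def LowerData.I (D : LowerData) : Set Z3 := {p ∈ D.L | p + (1, 1, 1) ∉ D.L}

/-- The complement `𝒰 = ℤ³_{≤0} \ ℒ`. -/
def LowerData.U (D : LowerData) : Set Z3 := {p : Z3 | oct p ∧ p ∉ D.L}

/-! ### Groves -/

/-- The set of diagonals of all rhombi contained in `I` (the edges of `Γ_ℐ`). -/
def allDiag (I : Set Z3) : Set (Sym2 Z3) :=
  {e | ∃ p : Z3,
    (rhA p ⊆ I ∧ (e = Ea p ∨ e = ea p)) ∨
    (rhB p ⊆ I ∧ (e = Eb p ∨ e = eb p)) ∨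
    (rhC p ⊆ I ∧ (e = Ec p ∨ e = ec p))}

/-- The graph on `ℤ³` with the given edge set. -/
def graphOf (E : Set (Sym2 Z3)) : SimpleGraph Z3 where
  Adj p q := p ≠ q ∧ s(p, q) ∈ E
  symm := by
    constructor
    intro p q h
    exact ⟨h.1.symm, by rw [Sym2.eq_swap]; exact h.2⟩
  loopless := by
    constructor
    intro p h
    exact h.1 rfl

/-- The prescribed boundary vertex sets for the connectivity condition of groves, for a
given `N`. -/
def BSets (N : ℤ) : Set (Set Z3) :=
  {S | ∃ p q : ℤ, 0 > p ∧ p > q ∧ (p + q = -N - 1 ∨ p + q = -N - 2) ∧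
      (S = {((0 : ℤ), p, q), (p, 0, q)} ∨ S = {(p, q, (0 : ℤ)), ((0 : ℤ), q, p)} ∨
        S = {(q, (0 : ℤ), p), (q, p, (0 : ℤ))})} ∪
  {S | ∃ p : ℤ, (2 * p = -N - 1 ∨ 2 * p = -N - 2) ∧
      S = {((0 : ℤ), p, p), (p, (0 : ℤ), p), (p, p, (0 : ℤ))}} ∪
  {S | ∃ q : ℤ, q ≤ -N - 1 ∧
      (S = {((0 : ℤ), (0 : ℤ), q)} ∨ S = {((0 : ℤ), q, (0 : ℤ))} ∨ S = {(q, (0 : ℤ), (0 : ℤ))})}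

/-- An `ℐ`-grove: a subgraph of `Γ_ℐ` (on the vertex set `ℐ`) containing exactly one diagonal
of each rhombus contained in `ℐ`, eventually all short diagonals, and with the prescribed
connectivity along the boundary. -/
structure Grove (I : Set Z3) where
  edges : Set (Sym2 Z3)
  sub : edges ⊆ allDiag I
  diagA : ∀ p : Z3, rhA p ⊆ I → Xor' (Ea p ∈ edges) (ea p ∈ edges)
  diagB : ∀ p : Z3, rhB p ⊆ I → Xor' (Eb p ∈ edges) (eb p ∈ edges)
  diagC : ∀ p : Z3, rhC p ⊆ I → Xor' (Ec p ∈ edges) (ec p ∈ edges)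
  short : ∃ N₀ : ℤ,
      (∀ p : Z3, rhA p ⊆ I → (∀ v ∈ rhA p, sum3 v < -N₀) → ea p ∈ edges) ∧
      (∀ p : Z3, rhB p ⊆ I → (∀ v ∈ rhB p, sum3 v < -N₀) → eb p ∈ edges) ∧
      (∀ p : Z3, rhC p ⊆ I → (∀ v ∈ rhC p, sum3 v < -N₀) → ec p ∈ edges)
  conn : ∃ N₁ : ℤ, ∀ N : ℤ, N₁ ≤ N →
      (∀ S ∈ BSets N, ∀ u ∈ S, ∀ v ∈ S, (graphOf edges).Reachable u v) ∧
      (∀ v ∈ I, ∃! S : Set Z3, S ∈ BSets N ∧ ∃ u ∈ S, (graphOf edges).Reachable v u)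

/-- The weight `w(G)` of a grove: the product of the conductances of the long diagonals
occurring in `G` (a finite product). -/
def wt (C : Conduct) {I : Set Z3} (G : Grove I) : ℝ :=
  ∏ᶠ p : Z3,
    ((if Ea p ∈ G.edges then C.Ca p else 1) * (if Eb p ∈ G.edges then C.Cb p else 1) *
      (if Ec p ∈ G.edges then C.Cc p else 1))

/-- The partition function `Z_ℐ = ∑_{G ∈ 𝒢(ℐ)} w(G)`. -/
def Zf (C : Conduct) (D : LowerData) : ℝ := ∑' G : Grove D.I, wt C G

/-- The Boltzmann probability measure `ℙ^C_ℐ(G) = w(G)/Z_ℐ`. -/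
def prb (C : Conduct) (D : LowerData) (G : Grove D.I) : ℝ := wt C G / Zf C D

/-- The probability that a given edge occurs in a random `ℐ`-grove. -/
def edgeProb (C : Conduct) (D : LowerData) (e : Sym2 Z3) : ℝ :=
  (∑' G : Grove D.I, if e ∈ G.edges then wt C G else 0) / Zf C D

/-- The degree of a vertex in a grove. -/
def deg {I : Set Z3} (G : Grove I) (v : Z3) : ℕ :=
  {e : Sym2 Z3 | e ∈ G.edges ∧ v ∈ e}.ncard

/-- `m_g(G) = ∏_{(i,j,k) ∈ ℐ} g(i,j,k)^(deg(i,j,k) - 2)` (a finite product). -/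
def mWt (g : Z3 → ℝ) (D : LowerData) (G : Grove D.I) : ℝ :=
  ∏ᶠ p ∈ D.I, g p ^ ((deg G p : ℤ) - 2)

/-- The generalized cube recurrence (the extension equations on `𝒰`). -/
def GenRec (C : Conduct) (D : LowerData) (g : Z3 → ℝ) : Prop :=
  ∀ p ∈ D.U, g p * g (p + (-1, -1, -1)) =
    C.U p * (g (p + (-1, 0, 0)) * g (p + (0, -1, -1))) +
    C.V p * (g (p + (0, -1, 0)) * g (p + (-1, 0, -1))) +
    C.W p * (g (p + (0, 0, -1)) * g (p + (-1, -1, 0)))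

/-! ### Standard initial conditions -/

lemma stdFin (n : ℤ) : {p : Z3 | oct p ∧ ¬ (sum3 p ≤ 1 - n)}.Finite := by
  apply Set.Finite.subset (Set.finite_Icc ((1 - n, 1 - n, 1 - n) : Z3) ((0, 0, 0) : Z3))
  rintro ⟨a, b, c⟩ ⟨hoct, hs⟩
  simp only [oct, sum3, not_le] at hoct hs
  simp only [Set.mem_Icc, Prod.mk_le_mk]
  omega

/-- The standard initial conditions of order `n`, determined by
`ℒ = {(i,j,k) ∈ ℤ³_{≤0} : i+j+k ≤ 1-n}`. -/
def stdD (n : ℤ) : LowerData where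
  L := {p : Z3 | oct p ∧ sum3 p ≤ 1 - n}
  sub := fun _ hp => hp.1
  dc := by
    rintro ⟨a, b, c⟩ hp ⟨x, y, z⟩ hq
    simp only [Set.mem_setOf_eq, oct, sum3, Prod.mk_le_mk] at hp hq ⊢
    omega
  cofin := by
    apply (stdFin n).subset
    rintro p ⟨hoct, hnot⟩
    exact ⟨hoct, fun hle => hnot ⟨hoct, hle⟩⟩

/-! ### Canonical edge probabilities and creation rates -/

/-- The edge probability `p(i,j,k)` of the long diagonal `E_a(i,j,k)`, computed with the
standard initial conditions whose set of initial conditions contains `r_a(i,j,k)` (the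
probability does not depend on this choice). -/
def pA (C : Conduct) (p : Z3) : ℝ := edgeProb C (stdD (1 - sum3 p)) (Ea p)

/-- The edge probability `q(i,j,k)` of the long diagonal `E_b(i,j,k)`. -/
def pB (C : Conduct) (p : Z3) : ℝ := edgeProb C (stdD (1 - sum3 p)) (Eb p)

/-- The edge probability `r(i,j,k)` of the long diagonal `E_c(i,j,k)`. -/
def pC (C : Conduct) (p : Z3) : ℝ := edgeProb C (stdD (1 - sum3 p)) (Ec p)

/-- The creation rate `E(i,j,k) = 1 - p(i,j,k) - q(i,j,k) - r(i,j,k)`. -/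
def crE (C : Conduct) (p : Z3) : ℝ := 1 - pA C p - pB C p - pC C p

/-! ### Generating functions -/

/-- The generating function `∑ p(-i,-j,-k) x^i y^j z^k` for the edge probabilities `p`. -/
def genP (C : Conduct) : MvPowerSeries (Fin 3) ℝ :=
  fun d => pA C (-(d 0 : ℤ), -(d 1 : ℤ), -(d 2 : ℤ))

/-- The generating function `∑ q(-i,-j,-k) x^i y^j z^k` for the edge probabilities `q`. -/
def genQ (C : Conduct) : MvPowerSeries (Fin 3) ℝ :=
  fun d => pB C (-(d 0 : ℤ), -(d 1 : ℤ), -(d 2 : ℤ))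

/-- The generating function `∑ r(-i,-j,-k) x^i y^j z^k` for the edge probabilities `r`. -/
def genR (C : Conduct) : MvPowerSeries (Fin 3) ℝ :=
  fun d => pC C (-(d 0 : ℤ), -(d 1 : ℤ), -(d 2 : ℤ))

/-- The creation rate generating function `F(x,y,z) = ∑ E(-i,-j,-k) x^i y^j z^k`. -/
def genF (C : Conduct) : MvPowerSeries (Fin 3) ℝ :=
  fun d => crE C (-(d 0 : ℤ), -(d 1 : ℤ), -(d 2 : ℤ))

/-- The formal power series `x_i/(1-x_i) = ∑_{k ≥ 1} x_i^k`. -/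
def geomS (i : Fin 3) : MvPowerSeries (Fin 3) ℝ :=
  fun d => if d = Finsupp.single i (d i) ∧ 1 ≤ d i then 1 else 0

/-! The ratios `C_q(p) c_q(p - e_q)` of `C^f` do not depend on `q`: each equals the cross ratio
`f(p-e₁) f(p-e₂) f(p-e₃) f(p-e₁-e₂-e₃) / (f(p) f(p-e₁-e₂) f(p-e₁-e₃) f(p-e₂-e₃))` of `f` on
the unit cube below `p`, as a formal identity. After clearing denominators, `S(p)` becomes
the right-hand side of the cube recurrence, which turns it into the same cross ratio. -/

theorem oct.add {p q : Z3} (hp : oct p) (hq : oct q) : oct (p + q) :=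
  ⟨add_nonpos hp.1 hq.1, add_nonpos hp.2.1 hq.2.1, add_nonpos hp.2.2 hq.2.2⟩

def cubeCrossRatio (f : Z3 → ℝ) (p : Z3) : ℝ :=
  f (p + (-1, 0, 0)) * f (p + (0, -1, 0)) * f (p + (0, 0, -1)) * f (p + (-1, -1, -1)) /
    (f p * f (p + (-1, -1, 0)) * f (p + (-1, 0, -1)) * f (p + (0, -1, -1)))

section Cf

variable (f : Z3 → ℝ) (p : Z3)

theorem Cf_Ca_mul_inv :
    (Cf f).Ca p * ((Cf f).Ca (p + (-1, 0, 0)))⁻¹ = cubeCrossRatio f p := by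
  simp only [Cf, cubeCrossRatio, add_assoc, Prod.mk_add_mk, add_zero, zero_add, inv_div]
  ring

theorem Cf_Cb_mul_inv :
    (Cf f).Cb p * ((Cf f).Cb (p + (0, -1, 0)))⁻¹ = cubeCrossRatio f p := by
  simp only [Cf, cubeCrossRatio, add_assoc, Prod.mk_add_mk, add_zero, zero_add, inv_div]
  ring

theorem Cf_Cc_mul_inv :
    (Cf f).Cc p * ((Cf f).Cc (p + (0, 0, -1)))⁻¹ = cubeCrossRatio f p := by
  simp only [Cf, cubeCrossRatio, add_assoc, Prod.mk_add_mk, add_zero, zero_add, inv_div]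
  ring

theorem Cf_S_eq_cubeCrossRatio (h0 : f p ≠ 0) (hab : f (p + (-1, -1, 0)) ≠ 0)
    (hac : f (p + (-1, 0, -1)) ≠ 0) (hbc : f (p + (0, -1, -1)) ≠ 0)
    (hrec : f p * f (p + (-1, -1, -1)) =
      f (p + (-1, 0, 0)) * f (p + (0, -1, -1)) +
        f (p + (0, -1, 0)) * f (p + (-1, 0, -1)) +
        f (p + (0, 0, -1)) * f (p + (-1, -1, 0))) :
    (Cf f).S p = cubeCrossRatio f p := by
  simp only [Conduct.S, Cf, cubeCrossRatio]
  field_simp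
  linear_combination -(f (p + (-1, 0, 0)) * f (p + (0, -1, 0)) * f (p + (0, 0, -1))) * hrec

end Cf

theorem statement0 (f : Z3 → ℝ) (hpos : PosOn f) (hrec : CubeRec f) :
    ∀ p : Z3, oct p →
      (Cf f).Ca p * ((Cf f).Ca (p + (-1, 0, 0)))⁻¹ = (Cf f).S p ∧
      (Cf f).Cb p * ((Cf f).Cb (p + (0, -1, 0)))⁻¹ = (Cf f).S p ∧
      (Cf f).Cc p * ((Cf f).Cc (p + (0, 0, -1)))⁻¹ = (Cf f).S p := by
  intro p hp
  have hne : ∀ μ : Z3, oct μ → f (p + μ) ≠ 0 := fun μ hμ => (hpos _ (hp.add hμ)).ne'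
  have hS : (Cf f).S p = cubeCrossRatio f p :=
    Cf_S_eq_cubeCrossRatio f p (hpos p hp).ne' (hne _ (by norm_num [oct]))
      (hne _ (by norm_num [oct])) (hne _ (by norm_num [oct])) (hrec p hp)
  rw [hS, Cf_Ca_mul_inv, Cf_Cb_mul_inv, Cf_Cc_mul_inv]
  exact ⟨rfl, rfl, rfl⟩

end
end

section
/- Let f : ℤ³≤0 → ℝ>0 satisfy the cube recurrence and let C = C^f. Then for all (i,j,k) ∈ ℤ³≤0: U(i,j,k) = f(i−1,j,k)f(i,j−1,k−1)/(f(i−1,j−1,k−1)f(i,j,k)), V(i,j,k) = f(i,j−1,k)f(i−1,j,k−1)/(f(i−1,j−1,k−1)f(i,j,k)), and W(i,j,k) = f(i,j,k−1)f(i−1,j−1,k)/(f(i−1,j−1,k−1)f(i,j,k)). In particular U(i,j,k) + V(i,j,k) + W(i,j,k) = 1. -/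
open scoped BigOperators
open scoped Classical

noncomputable section

/-! Each summand of `(Cf f).Δ p` is `cubeScale f p` times one of the three terms on the right of
the cube recurrence at `p`, so `Δ` is `cubeScale f p` times its left side, and `U`, `V`, `W` are
those three terms divided by their sum. -/

lemma oct_add {p μ : Z3} (hp : oct p) (hμ : oct μ) : oct (p + μ) :=
  ⟨add_nonpos hp.1 hμ.1, add_nonpos hp.2.1 hμ.2.1, add_nonpos hp.2.2 hμ.2.2⟩

lemma PosOn.ne_zero_add {f : Z3 → ℝ} (hpos : PosOn f) {p : Z3} (hp : oct p) {μ : Z3}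
    (hμ : oct μ) : f (p + μ) ≠ 0 :=
  (hpos _ (oct_add hp hμ)).ne'

lemma Conduct.U_add_V_add_W (C : Conduct) {p : Z3} (h : C.Δ p ≠ 0) :
    C.U p + C.V p + C.W p = 1 := by
  rw [Conduct.U, Conduct.V, Conduct.W, ← add_div, ← add_div, ← Conduct.Δ, div_self h]

def cubeScale (f : Z3 → ℝ) (p : Z3) : ℝ :=
  f (p + (-1, -1, 0)) * f (p + (-1, 0, -1)) * f (p + (0, -1, -1)) /
    (f (p + (-1, -1, -1)) ^ 2 * (f (p + (-1, 0, 0)) * f (p + (0, -1, 0)) * f (p + (0, 0, -1))))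

section
variable {f : Z3 → ℝ} {p : Z3}

lemma Cf_Cb_mul_Cc (h : f (p + (-1, 0, 0)) ≠ 0) :
    (Cf f).Cb (p + (0, -1, 0)) * (Cf f).Cc (p + (0, 0, -1)) =
      cubeScale f p * (f (p + (-1, 0, 0)) * f (p + (0, -1, -1))) := by
  simp only [Cf, cubeScale, add_assoc, Prod.mk_add_mk, zero_add, add_zero]
  field_simp

lemma Cf_Ca_mul_Cc (h : f (p + (0, -1, 0)) ≠ 0) :
    (Cf f).Ca (p + (-1, 0, 0)) * (Cf f).Cc (p + (0, 0, -1)) =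
      cubeScale f p * (f (p + (0, -1, 0)) * f (p + (-1, 0, -1))) := by
  simp only [Cf, cubeScale, add_assoc, Prod.mk_add_mk, zero_add, add_zero]
  field_simp

lemma Cf_Ca_mul_Cb (h : f (p + (0, 0, -1)) ≠ 0) :
    (Cf f).Ca (p + (-1, 0, 0)) * (Cf f).Cb (p + (0, -1, 0)) =
      cubeScale f p * (f (p + (0, 0, -1)) * f (p + (-1, -1, 0))) := by
  simp only [Cf, cubeScale, add_assoc, Prod.mk_add_mk, zero_add, add_zero]
  field_simp

lemma cubeScale_ne_zero (hpos : PosOn f) (hp : oct p) : cubeScale f p ≠ 0 := by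
  unfold cubeScale
  have h := fun μ (hμ : oct μ) => hpos.ne_zero_add hp hμ
  have := h (-1, -1, 0) (by norm_num [oct])
  have := h (-1, 0, -1) (by norm_num [oct])
  have := h (0, -1, -1) (by norm_num [oct])
  have := h (-1, -1, -1) (by norm_num [oct])
  have := h (-1, 0, 0) (by norm_num [oct])
  have := h (0, -1, 0) (by norm_num [oct])
  have := h (0, 0, -1) (by norm_num [oct])
  positivity

lemma Cf_Δ (hpos : PosOn f) (hrec : CubeRec f) (hp : oct p) :
    (Cf f).Δ p = cubeScale f p * (f (p + (-1, -1, -1)) * f p) := by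
  rw [Conduct.Δ, Cf_Cb_mul_Cc (hpos.ne_zero_add hp (by norm_num [oct])),
    Cf_Ca_mul_Cc (hpos.ne_zero_add hp (by norm_num [oct])),
    Cf_Ca_mul_Cb (hpos.ne_zero_add hp (by norm_num [oct])), mul_comm (f _) (f p), hrec p hp]
  ring

end

theorem statement3 (f : Z3 → ℝ) (hpos : PosOn f) (hrec : CubeRec f) :
    ∀ p : Z3, oct p →
      (Cf f).U p = f (p + (-1, 0, 0)) * f (p + (0, -1, -1)) / (f (p + (-1, -1, -1)) * f p) ∧
      (Cf f).V p = f (p + (0, -1, 0)) * f (p + (-1, 0, -1)) / (f (p + (-1, -1, -1)) * f p) ∧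
      (Cf f).W p = f (p + (0, 0, -1)) * f (p + (-1, -1, 0)) / (f (p + (-1, -1, -1)) * f p) ∧
      (Cf f).U p + (Cf f).V p + (Cf f).W p = 1 := by
  intro p hp
  have hκ := cubeScale_ne_zero hpos hp
  have hΔ := Cf_Δ hpos hrec hp
  refine ⟨?_, ?_, ?_, ?_⟩
  · rw [Conduct.U, Cf_Cb_mul_Cc (hpos.ne_zero_add hp (by norm_num [oct])), hΔ,
      mul_div_mul_left _ _ hκ]
  · rw [Conduct.V, Cf_Ca_mul_Cc (hpos.ne_zero_add hp (by norm_num [oct])), hΔ,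
      mul_div_mul_left _ _ hκ]
  · rw [Conduct.W, Cf_Ca_mul_Cb (hpos.ne_zero_add hp (by norm_num [oct])), hΔ,
      mul_div_mul_left _ _ hκ]
  · refine (Cf f).U_add_V_add_W ?_
    rw [hΔ]
    exact mul_ne_zero hκ (mul_ne_zero (hpos.ne_zero_add hp (by norm_num [oct])) (hpos p hp).ne')

end
end

section
/- Let C be a positive Y−Δ consistent conductance function, let j,k ≥ 0, and let ℐ be any set of initial conditions containing the rhombus r_a(0,−j,−k). Then ℙ^C_ℐ({G ∈ 𝒢(ℐ) : E_a(0,−j,−k) ∈ G}) = 0; that is, the edge probability p(0,−j,−k) vanishes. Equivalently, no ℐ-grove contains the long diagonal E_a(0,−j,−k) = {(0,−j−1,−k),(0,−j,−k−1)}. -/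
open scoped BigOperators
open scoped Classical

noncomputable section

/-!
Suppose some grove contains a long diagonal `E_a(q)`, `q = (0, j, k)`, on the face `i = 0`; take
one with `i + j + k` minimal; such a minimum exists because far from the origin every rhombus
carries its short diagonal.  Below `q` no rhombus of the face carries its long diagonal, so the two
endpoints of `E_a(q)` are joined by chains of short diagonals `e_a` to the points
`(0, j - 1 - T, k - T)` and `(0, j - T, k - 1 - T)` for every `T`.  For `T` large these two
points lie in two different boundary sets, which the connectivity condition forbids to be in the
same component; but `E_a(q)` joins them.
-/

lemma sum3_add (p q : Z3) : sum3 (p + q) = sum3 p + sum3 q := by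
  simp only [sum3, Prod.fst_add, Prod.snd_add]
  ring

namespace LowerData

lemma mem_I_of_fst_eq_zero (D : LowerData) {p : Z3} (hp : p.1 = 0) (hL : p ∈ D.L) :
    p ∈ D.I :=
  ⟨hL, fun h => by simpa [hp] using (D.sub _ h).1⟩

lemma rhA_subset_I_of_fst_eq_zero (D : LowerData) {p : Z3} (hp : p.1 = 0) (hL : p ∈ D.L) :
    rhA p ⊆ D.I := by
  intro v hv
  have hle : v ≤ p ∧ v.1 = 0 := by
    simp only [rhA, Set.mem_insert_iff, Set.mem_singleton_iff] at hv
    rcases hv with rfl | rfl | rfl | rfl <;> simp [Prod.le_def, hp]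
  exact D.mem_I_of_fst_eq_zero hle.2 (D.dc p hL v hle.1)

end LowerData

lemma graphOf_adj_of_ea_mem {E : Set (Sym2 Z3)} {p : Z3} (h : ea p ∈ E) :
    (graphOf E).Adj p (p + ((0 : ℤ), -1, -1)) :=
  ⟨fun hc => by simp [Prod.ext_iff] at hc, h⟩

lemma graphOf_adj_of_Ea_mem {E : Set (Sym2 Z3)} {p : Z3} (h : Ea p ∈ E) :
    (graphOf E).Adj (p + ((0 : ℤ), -1, 0)) (p + ((0 : ℤ), 0, -1)) :=
  ⟨fun hc => by simp [Prod.ext_iff] at hc, h⟩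

lemma graphOf_reachable_of_ea_mem {E : Set (Sym2 Z3)} (w : Z3) (T : ℕ)
    (h : ∀ t < T, ea (w + ((0 : ℤ), -(t : ℤ), -(t : ℤ))) ∈ E) :
    (graphOf E).Reachable w (w + ((0 : ℤ), -(T : ℤ), -(T : ℤ))) := by
  induction T with
  | zero => convert SimpleGraph.Reachable.refl w; simp [Prod.ext_iff]
  | succ t ih =>
    refine (ih fun s hs => h s (by omega)).trans ?_
    convert (graphOf_adj_of_ea_mem (h t (by omega))).reachable using 1
    simp only [Prod.ext_iff, Prod.fst_add, Prod.snd_add]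
    push_cast
    refine ⟨by ring, by ring, by ring⟩

lemma exists_mem_BSets_of_face (N P Q : ℤ) (hP : P < 0) (hQ : Q < 0) (hsum : P + Q = -N - 1) :
    ∃ S ∈ BSets N, ((0 : ℤ), P, Q) ∈ S ∧ ∀ x ∈ S, x.1 = 0 → x = ((0 : ℤ), P, Q) := by
  rcases lt_trichotomy P Q with h | rfl | h
  · refine ⟨{(Q, P, (0 : ℤ)), ((0 : ℤ), P, Q)}, ?_, by simp, ?_⟩
    · exact .inl (.inl ⟨Q, P, hQ, h, .inl (by omega), .inr (.inl rfl)⟩)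
    · simp only [Set.mem_insert_iff, Set.mem_singleton_iff]
      rintro x (rfl | rfl) hx0
      · simp only at hx0; omega
      · rfl
  · refine ⟨{((0 : ℤ), P, P), (P, (0 : ℤ), P), (P, P, (0 : ℤ))}, ?_, by simp, ?_⟩
    · exact .inl (.inr ⟨P, .inl (by omega), rfl⟩)
    · simp only [Set.mem_insert_iff, Set.mem_singleton_iff]
      rintro x (rfl | rfl | rfl) hx0
      · rfl
      all_goals simp only at hx0; omega
  · refine ⟨{((0 : ℤ), P, Q), (P, (0 : ℤ), Q)}, ?_, by simp, ?_⟩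
    · exact .inl (.inl ⟨P, Q, hP, h, .inl (by omega), .inl rfl⟩)
    · simp only [Set.mem_insert_iff, Set.mem_singleton_iff]
      rintro x (rfl | rfl) hx0
      · rfl
      · simp only at hx0; omega

namespace Grove

section

variable {I : Set Z3} (G : Grove I)

lemma ea_mem_of_Ea_not_mem {p : Z3} (hp : rhA p ⊆ I) (hE : Ea p ∉ G.edges) : ea p ∈ G.edges := by
  rcases G.diagA p hp with ⟨h, -⟩ | ⟨h, -⟩; exacts [absurd h hE, h]

lemma Ea_not_mem_of_ea_mem {p : Z3} (hp : rhA p ⊆ I) (he : ea p ∈ G.edges) : Ea p ∉ G.edges := by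
  rcases G.diagA p hp with ⟨-, h⟩ | ⟨-, h⟩; exacts [absurd he h, h]

lemma exists_le_sum3_of_Ea_mem :
    ∃ N₀ : ℤ, ∀ p : Z3, rhA p ⊆ I → Ea p ∈ G.edges → -N₀ ≤ sum3 p := by
  obtain ⟨N₀, hshort, -, -⟩ := G.short
  refine ⟨N₀, fun p hp hE => ?_⟩
  by_contra! hlt
  refine G.Ea_not_mem_of_ea_mem hp (hshort p hp fun v hv => ?_) hE
  simp only [rhA, Set.mem_insert_iff, Set.mem_singleton_iff] at hv
  rcases hv with rfl | rfl | rfl | rfl <;>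
    simp only [sum3, Prod.fst_add, Prod.snd_add] at hlt ⊢ <;> omega

lemma exists_eq_of_reachable_face_points : ∃ N₁ : ℤ, ∀ N : ℤ, N₁ ≤ N → ∀ v ∈ I, ∀ x x' : Z3,
    x.1 = 0 → x.2.1 < 0 → x.2.2 < 0 → sum3 x = -N - 1 →
    x'.1 = 0 → x'.2.1 < 0 → x'.2.2 < 0 → sum3 x' = -N - 1 →
    (graphOf G.edges).Reachable v x → (graphOf G.edges).Reachable v x' → x = x' := by
  obtain ⟨N₁, hconn⟩ := G.conn
  refine ⟨N₁, fun N hN v hv ⟨_, P, Q⟩ ⟨_, P', Q'⟩ hx hP hQ hsum hx' hP' hQ' hsum' hreach hreach'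
    => ?_⟩
  obtain rfl : _ = (0 : ℤ) := hx
  obtain rfl : _ = (0 : ℤ) := hx'
  simp only [sum3, zero_add] at hsum hsum' hP hQ hP' hQ'
  obtain ⟨S, hS, hxS, hface⟩ := exists_mem_BSets_of_face N P Q hP hQ hsum
  obtain ⟨S', hS', hxS', -⟩ := exists_mem_BSets_of_face N P' Q' hP' hQ' hsum'
  obtain ⟨S₀, -, huniq⟩ := (hconn N hN).2 v hv
  have hSS' : S' = S :=
    (huniq S' ⟨hS', _, hxS', hreach'⟩).trans (huniq S ⟨hS, _, hxS, hreach⟩).symm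
  exact (hface _ (hSS' ▸ hxS') rfl).symm

end

section

variable {D : LowerData} (G : Grove D.I)

lemma reachable_descent_of_fst_eq_zero {w : Z3} {d : ℤ} (hw : w.1 = 0) (hL : w ∈ D.L)
    (hwd : sum3 w < d)
    (hbelow : ∀ q : Z3, q.1 = 0 → rhA q ⊆ D.I → sum3 q < d → Ea q ∉ G.edges) (T : ℕ) :
    (graphOf G.edges).Reachable w (w + ((0 : ℤ), -(T : ℤ), -(T : ℤ))) := by
  refine graphOf_reachable_of_ea_mem w T fun t _ => ?_
  have hq : (w + ((0 : ℤ), -(t : ℤ), -(t : ℤ))).1 = 0 := by simp [hw]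
  have hqL : w + ((0 : ℤ), -(t : ℤ), -(t : ℤ)) ∈ D.L :=
    D.dc w hL _ (by simp [Prod.le_def])
  have hrh := D.rhA_subset_I_of_fst_eq_zero hq hqL
  refine G.ea_mem_of_Ea_not_mem hrh (hbelow _ hq hrh ?_)
  rw [sum3_add]
  simp only [sum3] at hwd ⊢
  omega

theorem Ea_not_mem_of_fst_eq_zero {p : Z3} (hp : p.1 = 0) (hrh : rhA p ⊆ D.I) :
    Ea p ∉ G.edges := by
  intro hE
  obtain ⟨N₀, hN₀⟩ := G.exists_le_sum3_of_Ea_mem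
  obtain ⟨d, ⟨q, hq, hqI, hqE, rfl⟩, hmin⟩ := Int.exists_least_of_bdd
    (P := fun d => ∃ q : Z3, q.1 = 0 ∧ rhA q ⊆ D.I ∧ Ea q ∈ G.edges ∧ sum3 q = d)
    ⟨-N₀, fun d ⟨q, _, hqI, hqE, hd⟩ => hd ▸ hN₀ q hqI hqE⟩ ⟨_, p, hp, hrh, hE, rfl⟩
  have hbelow (q' : Z3) (hq' : q'.1 = 0) (hq'I : rhA q' ⊆ D.I) (hlt : sum3 q' < sum3 q) :
      Ea q' ∉ G.edges := fun hq'E => (hmin _ ⟨q', hq', hq'I, hq'E, rfl⟩).not_gt hlt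
  have huI : q + ((0 : ℤ), -1, 0) ∈ D.I := hqI (by simp [rhA])
  have hvI : q + ((0 : ℤ), 0, -1) ∈ D.I := hqI (by simp [rhA])
  obtain ⟨-, hqj, hqk⟩ := D.sub q (hqI (by simp [rhA])).1
  obtain ⟨N₁, hN₁⟩ := G.exists_eq_of_reachable_face_points
  set T : ℕ := (N₁ + sum3 q).toNat + 1
  have hu := G.reachable_descent_of_fst_eq_zero (by simp [hq]) huI.1
    (by rw [sum3_add]; simp [sum3]) hbelow T
  have hv := (graphOf_adj_of_Ea_mem hqE).reachable.trans <|
    G.reachable_descent_of_fst_eq_zero (by simp [hq]) hvI.1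
      (by rw [sum3_add]; simp [sum3]) hbelow T
  -- both descended points lie on the level `i + j + k = -(2T - sum3 q) - 1`
  have hfar := hN₁ (2 * T - sum3 q) (by omega) _ huI _ _ ?_ ?_ ?_ ?_ ?_ ?_ ?_ ?_ hu hv
  · simp [Prod.ext_iff] at hfar
  all_goals simp only [sum3, Prod.fst_add, Prod.snd_add] at hq ⊢; omega

end

end Grove

lemma edgeProb_eq_zero_of_forall_not_mem (C : Conduct) (D : LowerData) {e : Sym2 Z3}
    (h : ∀ G : Grove D.I, e ∉ G.edges) : edgeProb C D e = 0 := by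
  simp [edgeProb, h]

theorem statement14_general (C : Conduct) (j k : ℤ)
    (D : LowerData) (hrh : rhA ((0 : ℤ), -j, -k) ⊆ D.I) :
    edgeProb C D (Ea ((0 : ℤ), -j, -k)) = 0 ∧
      ∀ G : Grove D.I, Ea ((0 : ℤ), -j, -k) ∉ G.edges := by
  have hnot (G : Grove D.I) : Ea ((0 : ℤ), -j, -k) ∉ G.edges :=
    G.Ea_not_mem_of_fst_eq_zero rfl hrh
  exact ⟨edgeProb_eq_zero_of_forall_not_mem C D hnot, hnot⟩

theorem statement14 (C : Conduct) (hpos : C.Pos) (hyd : C.YD) (j k : ℤ)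
    (hj : 0 ≤ j) (hk : 0 ≤ k) (D : LowerData) (hrh : rhA ((0 : ℤ), -j, -k) ⊆ D.I) :
    edgeProb C D (Ea ((0 : ℤ), -j, -k)) = 0 ∧
      ∀ G : Grove D.I, Ea ((0 : ℤ), -j, -k) ∉ G.edges :=
  statement14_general C j k D hrh

end
end

section
/- For all positive real numbers a, b, c, d, e, f, consider the Laurent polynomial P(z,w) = (a+b+d+e+f·(2−z−z⁻¹))·(a+b+d+e+c·(2−z−z⁻¹)) − (aw+bzw+d+ez⁻¹)·(aw⁻¹+bz⁻¹w⁻¹+d+ez) in ℝ[z^{±1}, w^{±1}] (the determinant of the vector-bundle Laplacian of the torus graph T_{1,2} with monodromies z and w). The Newton polygon of P, i.e. the convex hull in ℝ² of the set of exponent vectors (i,j) such that the coefficient of z^i w^j in P is nonzero, is the hexagon with vertices (2,0), (2,1), (0,1), (−2,0), (−2,−1), (0,−1). -/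
noncomputable section

/-- The ring of real Laurent polynomials in two variables `z, w`, realized as the
monoid algebra `ℝ[ℤ × ℤ]`. -/
abbrev LP : Type := AddMonoidAlgebra ℝ (ℤ × ℤ)

/-- The variable `z`. -/
def zz : LP := AddMonoidAlgebra.single ((1 : ℤ), (0 : ℤ)) 1
/-- The variable `z⁻¹`. -/
def zi : LP := AddMonoidAlgebra.single ((-1 : ℤ), (0 : ℤ)) 1
/-- The variable `w`. -/
def ww : LP := AddMonoidAlgebra.single ((0 : ℤ), (1 : ℤ)) 1
/-- The variable `w⁻¹`. -/
def wi : LP := AddMonoidAlgebra.single ((0 : ℤ), (-1 : ℤ)) 1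
/-- Constants. -/
def cst (r : ℝ) : LP := AddMonoidAlgebra.single ((0 : ℤ), (0 : ℤ)) r

/-- The characteristic polynomial `P(z,w) = det Δ(z,w)` of the vector-bundle Laplacian of
`T_{1,2}` with conductances `a, b, c, d, e, f` and monodromies `z, w`. -/
def Plap (a b c d e f : ℝ) : LP :=
  (cst (a + b + d + e) + cst f * (2 - zz - zi)) *
      (cst (a + b + d + e) + cst c * (2 - zz - zi)) -
    (cst a * ww + cst b * zz * ww + cst d + cst e * zi) *
      (cst a * wi + cst b * zi * wi + cst d + cst e * zz)

/-!
Expanding the determinant, `P` has (at most) eleven monomials. Six of them sit at the vertices of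
the hexagon, with coefficients `cf`, `-be`, `-ad` (each occurring twice since
`P(z, w) = P(z⁻¹, w⁻¹)`), which are nonzero for positive conductances. The remaining five
exponents `(±1, 0)`, `(0, 0)`, `±(1, 1)` are midpoints of pairs of vertices, so they add nothing
to the convex hull.
-/

open AddMonoidAlgebra

lemma convexHull_eq_of_subset_of_subset_convexHull {𝕜 E : Type*} [Semiring 𝕜] [PartialOrder 𝕜]
    [AddCommMonoid E] [Module 𝕜 E] {s t : Set E} (hts : t ⊆ s) (hst : s ⊆ convexHull 𝕜 t) :
    convexHull 𝕜 s = convexHull 𝕜 t :=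
  (convexHull_min hst (convex_convexHull 𝕜 t)).antisymm (convexHull_mono hts)

lemma midpoint_mem_convexHull {𝕜 E : Type*} [Field 𝕜] [LinearOrder 𝕜] [IsStrictOrderedRing 𝕜]
    [AddCommGroup E] [Module 𝕜 E] {s : Set E} {x y : E} (hx : x ∈ s) (hy : y ∈ s) :
    midpoint 𝕜 x y ∈ convexHull 𝕜 s :=
  segment_subset_convexHull hx hy (midpoint_mem_segment x y)

def toPlane (q : ℤ × ℤ) : ℝ × ℝ := (q.1, q.2)

lemma toPlane_mem_convexHull_of_add_eq_two_nsmul {S : Set (ℤ × ℤ)} {u v x : ℤ × ℤ}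
    (hu : u ∈ S) (hv : v ∈ S) (hx : u + v = 2 • x) :
    toPlane x ∈ convexHull ℝ (toPlane '' S) := by
  convert midpoint_mem_convexHull (𝕜 := ℝ) (Set.mem_image_of_mem _ hu) (Set.mem_image_of_mem _ hv)
    using 1
  obtain ⟨hx₁, hx₂⟩ := Prod.ext_iff.mp hx
  simp only [Prod.fst_add, Prod.snd_add, nsmul_eq_mul] at hx₁ hx₂
  have hx₁' : (u.1 : ℝ) + v.1 = 2 * x.1 := by exact_mod_cast hx₁
  have hx₂' : (u.2 : ℝ) + v.2 = 2 * x.2 := by exact_mod_cast hx₂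
  ext <;> simp [toPlane, midpoint_eq_smul_add] <;> linarith

lemma two_eq_cst : (2 : LP) = cst 2 := rfl

lemma single_eq_smul_of' (m : ℤ × ℤ) (r : ℝ) : (single m r : LP) = r • of' ℝ (ℤ × ℤ) m := by
  rw [of'_apply, smul_single', mul_one]

lemma Plap_eq_sum_single (a b c d e f : ℝ) :
    Plap a b c d e f =
      single (2, 0) (c * f) + single (-2, 0) (c * f)
      + single (1, 0) (-((a + b + d + e) * (c + f)) - 4 * c * f - (a * b + d * e))
      + single (-1, 0) (-((a + b + d + e) * (c + f)) - 4 * c * f - (a * b + d * e))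
      + single (0, 0) ((a + b + d + e) ^ 2 + 2 * (a + b + d + e) * (c + f) + 6 * c * f
          - (a ^ 2 + b ^ 2 + d ^ 2 + e ^ 2))
      - single (0, 1) (a * d) - single (0, -1) (a * d)
      - single (1, 1) (a * e + b * d) - single (-1, -1) (a * e + b * d)
      - single (2, 1) (b * e) - single (-2, -1) (b * e) := by
  simp only [Plap, two_eq_cst, cst, zz, zi, ww, wi, mul_add, add_mul, mul_sub, sub_mul,
    single_mul_single, Prod.mk_add_mk]
  norm_num only
  -- the monomials `of' m` are the atoms of the resulting `ℝ`-linear identity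
  simp only [single_eq_smul_of']
  module

def hexagonVertices : Set (ℤ × ℤ) := {(2, 0), (2, 1), (0, 1), (-2, 0), (-2, -1), (0, -1)}

lemma mem_of_coeff_Plap_ne_zero {a b c d e f : ℝ} {q : ℤ × ℤ}
    (hq : (Plap a b c d e f).coeff q ≠ 0) :
    q ∈ hexagonVertices ∪ {(1, 0), (-1, 0), (0, 0), (1, 1), (-1, -1)} := by
  contrapose! hq
  simp only [hexagonVertices, Set.mem_union, Set.mem_insert_iff, Set.mem_singleton_iff,
    not_or] at hq
  simp [Plap_eq_sum_single, coeff_add, coeff_sub, coeff_single, hq]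

lemma coeff_Plap_ne_zero {a b c d e f : ℝ} (ha : a ≠ 0) (hb : b ≠ 0) (hc : c ≠ 0)
    (hd : d ≠ 0) (he : e ≠ 0) (hf : f ≠ 0) {q : ℤ × ℤ} (hq : q ∈ hexagonVertices) :
    (Plap a b c d e f).coeff q ≠ 0 := by
  rcases hq with rfl | rfl | rfl | rfl | rfl | rfl <;>
    simp [Plap_eq_sum_single, coeff_add, coeff_sub, coeff_single, ha, hb, hc, hd, he, hf]

lemma toPlane_image_subset_convexHull_hexagon :
    toPlane '' (hexagonVertices ∪ {(1, 0), (-1, 0), (0, 0), (1, 1), (-1, -1)}) ⊆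
      convexHull ℝ (toPlane '' hexagonVertices) := by
  rintro _ ⟨q, hq | hq, rfl⟩
  · exact subset_convexHull ℝ _ (Set.mem_image_of_mem _ hq)
  rcases hq with rfl | rfl | rfl | rfl | rfl
  · refine toPlane_mem_convexHull_of_add_eq_two_nsmul (u := (2, 1)) (v := (0, -1)) ?_ ?_ rfl <;>
      simp [hexagonVertices]
  · refine toPlane_mem_convexHull_of_add_eq_two_nsmul (u := (0, 1)) (v := (-2, -1)) ?_ ?_ rfl <;>
      simp [hexagonVertices]
  · refine toPlane_mem_convexHull_of_add_eq_two_nsmul (u := (2, 0)) (v := (-2, 0)) ?_ ?_ rfl <;>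
      simp [hexagonVertices]
  · refine toPlane_mem_convexHull_of_add_eq_two_nsmul (u := (2, 1)) (v := (0, 1)) ?_ ?_ rfl <;>
      simp [hexagonVertices]
  · refine toPlane_mem_convexHull_of_add_eq_two_nsmul (u := (-2, -1)) (v := (0, -1)) ?_ ?_ rfl <;>
      simp [hexagonVertices]

theorem statement18 (a b c d e f : ℝ) (ha : 0 < a) (hb : 0 < b) (hc : 0 < c)
    (hd : 0 < d) (he : 0 < e) (hf : 0 < f) :
    convexHull ℝ ((fun q : ℤ × ℤ => ((q.1 : ℝ), (q.2 : ℝ))) ''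
        {q : ℤ × ℤ | (Plap a b c d e f).coeff q ≠ 0}) =
      convexHull ℝ
        {((2 : ℝ), (0 : ℝ)), ((2 : ℝ), (1 : ℝ)), ((0 : ℝ), (1 : ℝ)),
          ((-2 : ℝ), (0 : ℝ)), ((-2 : ℝ), (-1 : ℝ)), ((0 : ℝ), (-1 : ℝ))} := by
  have hexagon_eq : ({((2 : ℝ), (0 : ℝ)), ((2 : ℝ), (1 : ℝ)), ((0 : ℝ), (1 : ℝ)),
      ((-2 : ℝ), (0 : ℝ)), ((-2 : ℝ), (-1 : ℝ)), ((0 : ℝ), (-1 : ℝ))} : Set (ℝ × ℝ)) =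
        toPlane '' hexagonVertices := by
    simp [hexagonVertices, toPlane, Set.image_insert_eq]
  rw [hexagon_eq]
  apply convexHull_eq_of_subset_of_subset_convexHull
  · exact Set.image_mono fun q => coeff_Plap_ne_zero ha.ne' hb.ne' hc.ne' hd.ne' he.ne' hf.ne'
  · exact (Set.image_mono fun q => mem_of_coeff_Plap_ne_zero).trans
      toPlane_image_subset_convexHull_hexagon

end
end
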